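/- For all ordinals α and β, ⟨α,β⟩_2 = α · β, where · is standard ordinal multiplication. -/

import Mathlib

/-!
Induction on `β` along the recursion defining `⟨α, -⟩₂`. At `β = 0, 1` both sides agree; when
`β` is its own CNF head `ω ^ β₁ > 1` it is a limit and `α * -` commutes with suprema; otherwise
left distributivity `α * (β_H + β_T) = α * β_H + α * β_T` is exactly the recursive clause, since
`⟨-,-⟩₁` is addition.
-/

open Ordinal Order

noncomputable def cnfHead (β : Ordinal) : Ordinal := ω ^ Ordinal.log ω β

noncomputable def cnfTail (β : Ordinal) : Ordinal := β - cnfHead β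

theorem cnfHead_le {β : Ordinal} (hβ : β ≠ 0) : cnfHead β ≤ β :=
  Ordinal.opow_log_le_self ω hβ

theorem cnfTail_lt {β : Ordinal} (hβ : β ≠ 0) : cnfTail β < β := by
  refine (Ordinal.sub_le_self β _).lt_of_ne fun h => ?_
  have h1 : cnfHead β + β = β := by
    have h2 := Ordinal.add_sub_cancel_of_le (cnfHead_le hβ)
    rwa [show β - cnfHead β = β from h] at h2
  have h2 : cnfHead β * ω ≤ β := Ordinal.add_eq_right_iff_mul_omega0_le.1 h1
  have h3 : β < ω ^ Order.succ (Ordinal.log ω β) :=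
    Ordinal.lt_opow_succ_log_self Ordinal.one_lt_omega0 β
  rw [Ordinal.opow_succ] at h3
  exact (not_le.2 h3) h2

noncomputable def ordOpAux (prev : Ordinal → Ordinal → Ordinal) (z : Ordinal)
    (α : Ordinal) : Ordinal → Ordinal :=
  WellFounded.fix Ordinal.lt_wf fun β IH =>
    if hβ0 : β = 0 then z
    else if β = 1 then α
    else if hp : cnfHead β = β then
      ⨆ γ : Set.Iio β, IH γ.1 γ.2
    else
      prev (IH (cnfHead β) ((cnfHead_le hβ0).lt_of_ne hp))
           (IH (cnfTail β) (cnfTail_lt hβ0))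

noncomputable def ordOp : ℕ → Ordinal → Ordinal → Ordinal
  | 0 => fun _ _ => 0
  | 1 => fun α β => α + β
  | 2 => fun α => ordOpAux (ordOp 1) 0 α
  | (n + 3) => fun α => ordOpAux (ordOp (n + 2)) 1 α

theorem cnfHead_add_cnfTail {β : Ordinal} (hβ : β ≠ 0) : cnfHead β + cnfTail β = β :=
  Ordinal.add_sub_cancel_of_le (cnfHead_le hβ)

theorem isSuccLimit_of_cnfHead_eq_self {β : Ordinal} (hβ1 : β ≠ 1) (hβ : cnfHead β = β) :
    IsSuccLimit β := by
  rw [← hβ, cnfHead]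
  refine isSuccLimit_opow_left isSuccLimit_omega0 fun hlog => hβ1 ?_
  rw [← hβ, cnfHead, hlog, opow_zero]

theorem ordOpAux_eq (prev : Ordinal → Ordinal → Ordinal) (z α β : Ordinal) :
    ordOpAux prev z α β =
      if β = 0 then z
      else if β = 1 then α
      else if cnfHead β = β then ⨆ γ : Set.Iio β, ordOpAux prev z α γ.1
      else prev (ordOpAux prev z α (cnfHead β)) (ordOpAux prev z α (cnfTail β)) := by
  rw [ordOpAux, WellFounded.fix_eq]
  rfl

/-- For all ordinals `α, β`, we have `⟨α, β⟩₂ = α * β`, where `*` is standard ordinal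
multiplication. -/
theorem ordOp_two (α β : Ordinal) : ordOp 2 α β = α * β := by
  induction β using WellFoundedLT.induction with
  | ind β IH =>
  change ordOpAux (· + ·) 0 α β = α * β
  rw [ordOpAux_eq]
  split_ifs with h0 h1 hp
  · rw [h0, mul_zero]
  · rw [h1, mul_one]
  · have hlim := isSuccLimit_of_cnfHead_eq_self h1 hp
    calc ⨆ γ : Set.Iio β, ordOpAux (· + ·) 0 α γ.1 = ⨆ γ : Set.Iio β, α * γ.1 :=
          iSup_congr fun γ => IH γ.1 γ.2
      _ = α * β := by rw [← mul_iSup, hlim.iSup_Iio]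
  · calc ordOpAux (· + ·) 0 α (cnfHead β) + ordOpAux (· + ·) 0 α (cnfTail β)
        = α * cnfHead β + α * cnfTail β :=
          congr_arg₂ (· + ·) (IH _ ((cnfHead_le h0).lt_of_ne hp)) (IH _ (cnfTail_lt h0))
      _ = α * β := by rw [← mul_add, cnfHead_add_cnfTail h0]
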